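/- arXiv:1006.2348 — 11 statements merged into one kernel-verified Lean document; each statement's English description precedes it below -/
import Mathlib

section
/- Let F be a field of characteristic not 2, K a quadratic field extension of F with nontrivial F-automorphism σ, and b ∈ K \ F. Then the nonassociative quaternion algebra Cay(K,b) has no zero divisors: for x, y ∈ K × K, if x·y = (0,0) with respect to the multiplication (u,v)·(u',v') = (uu' + b·v'·σ(v), σ(u)·v' + u'·v), then x = (0,0) or y = (0,0). -/
/-- Multiplication of the nonassociative quaternion algebra `Cay(K, b)`:
`(u,v)·(u',v') = (uu' + b·v'·σ(v), σ(u)·v' + u'·v)`. -/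
def cayMul {F K : Type*} [Field F] [Field K] [Algebra F K]
    (σ : K ≃ₐ[F] K) (b : K) (x y : K × K) : K × K :=
  (x.1 * y.1 + b * y.2 * σ x.2, σ x.1 * y.2 + y.1 * x.2)

/-!
If `x·y = 0` with `x.2 ≠ 0` and `y.2 ≠ 0`, eliminating `y.1` from the two components gives
`b · N(x.2) = N(x.1)` for the norm `N(u) = u·σ(u)` of `K/F`. Norms are fixed by the
involution `σ`, so `b` would be fixed by `σ`, hence lie in `F`. If `x.2 = 0` or `y.2 = 0` the
product degenerates to a componentwise product in `K`, which has no zero divisors.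
-/

namespace AlgEquiv

variable {F K : Type*} [Field F] [Field K] [Algebra F K]

theorem orderOf_eq_two_of_finrank_eq_two (hK : Module.finrank F K = 2) {σ : K ≃ₐ[F] K}
    (hσ : σ ≠ 1) : orderOf σ = 2 := by
  have : FiniteDimensional F K := Module.finite_of_finrank_eq_succ hK
  have hle : orderOf σ ≤ 2 := hK ▸ orderOf_le_card_univ.trans AlgEquiv.card_le
  have hne : orderOf σ ≠ 1 := mt orderOf_eq_one_iff.mp hσ
  have hpos : 0 < orderOf σ := orderOf_pos σ
  omega

theorem apply_apply_of_orderOf_eq_two {σ : K ≃ₐ[F] K} (hσ : orderOf σ = 2) (u : K) :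
    σ (σ u) = u := by
  have hsq : σ * σ = 1 := by rw [← sq, ← hσ, pow_orderOf_eq_one]
  exact DFunLike.congr_fun hsq u

theorem mem_range_algebraMap_of_apply_eq [FiniteDimensional F K] {σ : K ≃ₐ[F] K}
    (hσ : orderOf σ = Module.finrank F K) {c : K} (hc : σ c = c) :
    c ∈ Set.range (algebraMap F K) := by
  -- By Artin's theorem `[K : L] = orderOf σ = [K : F]`, so `L = F`.
  set L := IntermediateField.fixedField (Subgroup.zpowers σ)
  have hLK : Module.finrank L K = Module.finrank F K := by
    rw [IntermediateField.finrank_fixedField_eq_card, Nat.card_zpowers, hσ]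
  have hFL : Module.finrank F L = 1 := by
    have := Module.finrank_mul_finrank F L K
    rw [hLK] at this
    exact (Nat.mul_eq_right Module.finrank_pos.ne').mp this
  have hσc : σ ∈ MulAction.stabilizer (K ≃ₐ[F] K) c := MulAction.mem_stabilizer_iff.mpr hc
  have hcL : c ∈ L := (IntermediateField.mem_fixedField_iff _ c).mpr fun f hf =>
    (Subgroup.zpowers_le.mpr hσc hf : f ∈ MulAction.stabilizer _ c)
  rw [IntermediateField.finrank_eq_one_iff.mp hFL] at hcL
  exact IntermediateField.mem_bot.mp hcL

end AlgEquiv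

section cayMul

variable {F K : Type*} [Field F] [Field K] [Algebra F K] (σ : K ≃ₐ[F] K) (b : K)

theorem cayMul_eq_zero_of_snd_eq_zero_left {x y : K × K} (hx : x.2 = 0)
    (h : cayMul σ b x y = 0) : x = 0 ∨ y = 0 := by
  have h1 : x.1 * y.1 = 0 := by simpa [cayMul, hx] using congrArg Prod.fst h
  have h2 : σ x.1 * y.2 = 0 := by simpa [cayMul, hx] using congrArg Prod.snd h
  rcases eq_or_ne x.1 0 with hx1 | hx1
  · exact .inl (Prod.ext hx1 hx)
  · exact .inr (Prod.ext ((mul_eq_zero.mp h1).resolve_left hx1)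
      ((mul_eq_zero.mp h2).resolve_left ((map_ne_zero σ).mpr hx1)))

theorem cayMul_eq_zero_of_snd_eq_zero_right {x y : K × K} (hy : y.2 = 0)
    (h : cayMul σ b x y = 0) : x = 0 ∨ y = 0 := by
  have h1 : x.1 * y.1 = 0 := by simpa [cayMul, hy] using congrArg Prod.fst h
  have h2 : y.1 * x.2 = 0 := by simpa [cayMul, hy] using congrArg Prod.snd h
  rcases eq_or_ne y.1 0 with hy1 | hy1
  · exact .inr (Prod.ext hy1 hy)
  · exact .inl (Prod.ext ((mul_eq_zero.mp h1).resolve_right hy1)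
      ((mul_eq_zero.mp h2).resolve_left hy1))

theorem mul_norm_eq_norm_of_cayMul_eq_zero {x y : K × K} (hy : y.2 ≠ 0)
    (h : cayMul σ b x y = 0) : b * (x.2 * σ x.2) = x.1 * σ x.1 := by
  have h1 : x.1 * y.1 + b * y.2 * σ x.2 = 0 := congrArg Prod.fst h
  have h2 : σ x.1 * y.2 + y.1 * x.2 = 0 := congrArg Prod.snd h
  have : y.2 * (b * (x.2 * σ x.2) - x.1 * σ x.1) = 0 := by
    linear_combination x.2 * h1 - x.1 * h2
  exact sub_eq_zero.mp ((mul_eq_zero.mp this).resolve_left hy)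

theorem apply_eq_of_cayMul_eq_zero (hσ : ∀ u, σ (σ u) = u) {x y : K × K} (hx : x.2 ≠ 0)
    (hy : y.2 ≠ 0) (h : cayMul σ b x y = 0) : σ b = b := by
  have hN : x.2 * σ x.2 ≠ 0 := mul_ne_zero hx ((map_ne_zero σ).mpr hx)
  have hb : b = x.1 * σ x.1 / (x.2 * σ x.2) :=
    eq_div_of_mul_eq hN (mul_norm_eq_norm_of_cayMul_eq_zero σ b hy h)
  rw [hb, map_div₀, map_mul, map_mul, hσ, hσ, mul_comm (σ x.1), mul_comm (σ x.2)]

end cayMul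

theorem cay_no_zero_divisors_general {F K : Type*} [Field F] [Field K] [Algebra F K]
    (hdim : Module.finrank F K = 2)
    (σ : K ≃ₐ[F] K) (hσ : σ ≠ AlgEquiv.refl)
    (b : K) (hb : b ∉ Set.range (algebraMap F K))
    (x y : K × K) (hxy : cayMul σ b x y = 0) :
    x = 0 ∨ y = 0 := by
  have : FiniteDimensional F K := Module.finite_of_finrank_eq_succ hdim
  have hord : orderOf σ = 2 := AlgEquiv.orderOf_eq_two_of_finrank_eq_two hdim hσ
  rcases eq_or_ne x.2 0 with hx | hx
  · exact cayMul_eq_zero_of_snd_eq_zero_left σ b hx hxy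
  rcases eq_or_ne y.2 0 with hy | hy
  · exact cayMul_eq_zero_of_snd_eq_zero_right σ b hy hxy
  have hσb : σ b = b := apply_eq_of_cayMul_eq_zero σ b
    (AlgEquiv.apply_apply_of_orderOf_eq_two hord) hx hy hxy
  exact absurd (AlgEquiv.mem_range_algebraMap_of_apply_eq (hord.trans hdim.symm) hσb) hb

/-- The nonassociative quaternion algebra `Cay(K,b)` over a field `F` of characteristic
not `2`, where `K/F` is a quadratic field extension with nontrivial `F`-automorphism `σ`
and `b ∈ K \ F`, has no zero divisors. -/
theorem cay_no_zero_divisors {F K : Type*} [Field F] [Field K] [Algebra F K]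
    (hchar : ringChar F ≠ 2)
    (hdim : Module.finrank F K = 2)
    (σ : K ≃ₐ[F] K) (hσ : σ ≠ AlgEquiv.refl)
    (b : K) (hb : b ∉ Set.range (algebraMap F K))
    (x y : K × K) (hxy : cayMul σ b x y = 0) :
    x = 0 ∨ y = 0 :=
  cay_no_zero_divisors_general hdim σ hσ b hb x y hxy
end

section
/- Let F be a field of characteristic not 2, K a quadratic field extension of F with nontrivial F-automorphism σ, and b ∈ K \ F. In A = Cay(K,b), every element of the form (u,0) with u ∈ K lies in the nucleus of A: for all u ∈ K and all y, z ∈ K × K, the associators [(u,0), y, z], [y, (u,0), z] and [y, z, (u,0)] all vanish. -/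
/-- The automorphism group of a degree-2 extension has order at most 2, so any
automorphism is an involution. -/
lemma cay_aux_sigma_sq {F K : Type*} [Field F] [Field K] [Algebra F K]
    (hdim : Module.finrank F K = 2) (σ : K ≃ₐ[F] K) (x : K) : σ (σ x) = x := by
  have hfd : FiniteDimensional F K := FiniteDimensional.of_finrank_pos (by omega)
  have hmul : σ * σ = 1 := by
    have hinj : Function.Injective (fun e : K ≃ₐ[F] K => (e : K →ₐ[F] K)) := by
      intro a b h
      ext k
      exact congrArg (fun f : K →ₐ[F] K => f k) h
    have hc : Fintype.card (K ≃ₐ[F] K) ≤ 2 := by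
      calc Fintype.card (K ≃ₐ[F] K) ≤ Fintype.card (K →ₐ[F] K) :=
            Fintype.card_le_of_injective _ hinj
        _ ≤ Module.finrank K (K →ₗ[F] K) := finrank_algHom F K
        _ = Module.finrank F K := Module.finrank_linearMap_self F K K
        _ = 2 := hdim
    have hpos : 1 ≤ Fintype.card (K ≃ₐ[F] K) := Fintype.card_pos
    rcases (by omega : Fintype.card (K ≃ₐ[F] K) = 1 ∨ Fintype.card (K ≃ₐ[F] K) = 2) with h | h
    · have hs : σ = 1 := Fintype.card_le_one_iff.mp (le_of_eq h) σ 1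
      rw [hs, mul_one]
    · have := pow_card_eq_one (x := σ)
      rwa [h, pow_two] at this
  have := congrArg (fun e : K ≃ₐ[F] K => e x) hmul
  simpa using this

/-- In the nonassociative quaternion algebra `Cay(K,b)`, every element of the form
`(u, 0)` with `u ∈ K` lies in the nucleus: all three associators involving `(u,0)`
vanish. -/
theorem cay_K_subset_nucleus {F K : Type*} [Field F] [Field K] [Algebra F K]
    (hchar : ringChar F ≠ 2)
    (hdim : Module.finrank F K = 2)
    (σ : K ≃ₐ[F] K) (hσ : σ ≠ AlgEquiv.refl)
    (b : K) (hb : b ∉ Set.range (algebraMap F K))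
    (u : K) (y z : K × K) :
    cayMul σ b (cayMul σ b (u, 0) y) z = cayMul σ b (u, 0) (cayMul σ b y z) ∧
    cayMul σ b (cayMul σ b y (u, 0)) z = cayMul σ b y (cayMul σ b (u, 0) z) ∧
    cayMul σ b (cayMul σ b y z) (u, 0) = cayMul σ b y (cayMul σ b z (u, 0)) := by
  have h2 : ∀ x : K, σ (σ x) = x := cay_aux_sigma_sq hdim σ
  refine ⟨?_, ?_, ?_⟩ <;>
    · simp only [cayMul, map_add, map_mul, map_zero, h2, mul_zero, zero_mul, add_zero,
        zero_add, Prod.mk.injEq]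
      constructor <;> ring
end

section
/- Let F be a field of characteristic not 2, K a quadratic field extension of F with nontrivial F-automorphism σ, and b ∈ K \ F. In A = Cay(K,b), the nucleus is contained in K: if x = (x0, x1) ∈ K × K satisfies [x, y, z] = [y, x, z] = [y, z, x] = 0 for all y, z ∈ K × K, then x1 = 0. -/
/-! Since `finrank F K` is prime, any `b ∉ F` generates `K`, so an automorphism fixing `b` is the
identity. Hence `σ b ≠ b`, and the second component of the associator `[j, x, j]`, `j = (0, 1)`,
is `(σ b - b) · σ x₁`, which forces `x₁ = 0`. -/

theorem Algebra.adjoin_singleton_eq_top_of_finrank_prime {F A : Type*} [Field F] [Ring A]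
    [IsDomain A] [Algebra F A] (hp : (Module.finrank F A).Prime) {a : A}
    (ha : a ∉ Set.range (algebraMap F A)) : Algebra.adjoin F {a} = ⊤ := by
  refine ((Subalgebra.isSimpleOrder_of_finrank_prime F A hp).eq_bot_or_eq_top _).resolve_left
    fun hbot => ha ?_
  exact Algebra.mem_bot.mp (hbot ▸ Algebra.self_mem_adjoin_singleton F a)

theorem AlgEquiv.mem_range_algebraMap_of_apply_eq_self {F A : Type*} [Field F] [Ring A]
    [IsDomain A] [Algebra F A] (hp : (Module.finrank F A).Prime) {σ : A ≃ₐ[F] A}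
    (hσ : σ ≠ AlgEquiv.refl) {a : A} (hfix : σ a = a) : a ∈ Set.range (algebraMap F A) := by
  by_contra ha
  refine hσ (AlgEquiv.coe_toAlgHom_injective ?_)
  exact AlgHom.ext_of_adjoin_eq_top (Algebra.adjoin_singleton_eq_top_of_finrank_prime hp ha)
    (by simpa using hfix)

theorem snd_eq_zero_of_cayMul_assoc_zero_one {F K : Type*} [Field F] [Field K] [Algebra F K]
    {σ : K ≃ₐ[F] K} {b : K} (hb : σ b ≠ b) {x : K × K}
    (h : cayMul σ b (cayMul σ b (0, 1) x) (0, 1) = cayMul σ b (0, 1) (cayMul σ b x (0, 1))) :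
    x.2 = 0 := by
  have hsnd : (σ b - b) * σ x.2 = 0 := by
    have := congrArg Prod.snd h
    simp only [cayMul, map_zero, map_one, map_mul, zero_mul, mul_zero, mul_one,
      zero_add, add_zero] at this
    linear_combination this
  simpa using (mul_eq_zero.mp hsnd).resolve_left (sub_ne_zero.mpr hb)

theorem cay_nucleus_subset_K_general {F K : Type*} [Field F] [Field K] [Algebra F K]
    (hdim : Module.finrank F K = 2)
    (σ : K ≃ₐ[F] K) (hσ : σ ≠ AlgEquiv.refl)
    (b : K) (hb : b ∉ Set.range (algebraMap F K))
    (x : K × K)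
    (hx : ∀ y z : K × K,
      cayMul σ b (cayMul σ b x y) z = cayMul σ b x (cayMul σ b y z) ∧
      cayMul σ b (cayMul σ b y x) z = cayMul σ b y (cayMul σ b x z) ∧
      cayMul σ b (cayMul σ b y z) x = cayMul σ b y (cayMul σ b z x)) :
    x.2 = 0 := by
  have hσb : σ b ≠ b := fun hfix =>
    hb (AlgEquiv.mem_range_algebraMap_of_apply_eq_self (hdim ▸ Nat.prime_two) hσ hfix)
  exact snd_eq_zero_of_cayMul_assoc_zero_one hσb (hx (0, 1) (0, 1)).2.1

/-- In the nonassociative quaternion algebra `Cay(K,b)`, the nucleus is contained in `K`: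
if `x = (x0, x1)` associates with all pairs of elements (all three associators vanish),
then `x1 = 0`. -/
theorem cay_nucleus_subset_K {F K : Type*} [Field F] [Field K] [Algebra F K]
    (hchar : ringChar F ≠ 2)
    (hdim : Module.finrank F K = 2)
    (σ : K ≃ₐ[F] K) (hσ : σ ≠ AlgEquiv.refl)
    (b : K) (hb : b ∉ Set.range (algebraMap F K))
    (x : K × K)
    (hx : ∀ y z : K × K,
      cayMul σ b (cayMul σ b x y) z = cayMul σ b x (cayMul σ b y z) ∧
      cayMul σ b (cayMul σ b y x) z = cayMul σ b y (cayMul σ b x z) ∧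
      cayMul σ b (cayMul σ b y z) x = cayMul σ b y (cayMul σ b z x)) :
    x.2 = 0 :=
  cay_nucleus_subset_K_general hdim σ hσ b hb x hx
end

section
/- Let F be a field of characteristic not 2, K a quadratic field extension of F with nontrivial F-automorphism σ, and b ∈ K \ F. For every nonzero x ∈ Cay(K,b), the left multiplication map λ_x : K × K → K × K, y ↦ x·y, and the right multiplication map ρ_x : y ↦ y·x are both bijective; that is, Cay(K,b) is a division algebra over F. -/
section Aux

variable {F K : Type*} [Field F] [Field K] [Algebra F K]

lemma cay_repr (hdim : Module.finrank F K = 2) {w : K}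
    (hw : w ∉ Set.range (algebraMap F K)) (z : K) :
    ∃ s t : F, z = algebraMap F K s + algebraMap F K t * w := by
  have hfd : FiniteDimensional F K := FiniteDimensional.of_finrank_eq_succ hdim
  have hw1 : w ∉ Submodule.span F ({1} : Set K) := by
    intro h
    rw [Submodule.mem_span_singleton] at h
    obtain ⟨a, ha⟩ := h
    exact hw ⟨a, by rw [Algebra.smul_def, mul_one] at ha; exact ha⟩
  have hlt : Submodule.span F ({1} : Set K) < Submodule.span F ({1, w} : Set K) := by
    refine lt_of_le_of_ne (Submodule.span_mono (by simp)) ?_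
    intro h
    exact hw1 (h ▸ Submodule.subset_span (by simp))
  have h1 : Module.finrank F (Submodule.span F ({1} : Set K)) = 1 :=
    finrank_span_singleton one_ne_zero
  have h2 : 2 ≤ Module.finrank F (Submodule.span F ({1, w} : Set K)) := by
    have := Submodule.finrank_lt_finrank_of_lt hlt
    omega
  have h3 : Module.finrank F (Submodule.span F ({1, w} : Set K)) ≤ 2 := by
    rw [← hdim]; exact Submodule.finrank_le _
  have htop : Submodule.span F ({1, w} : Set K) = ⊤ :=
    Submodule.eq_top_of_finrank_eq (by omega)
  have hz : z ∈ Submodule.span F ({1, w} : Set K) := htop ▸ Submodule.mem_top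
  rw [Submodule.mem_span_pair] at hz
  obtain ⟨s, t, hst⟩ := hz
  exact ⟨s, t, by rw [← hst, Algebra.smul_def, Algebra.smul_def, mul_one]⟩

lemma cay_fixed (hdim : Module.finrank F K = 2) {σ : K ≃ₐ[F] K}
    (hσ : σ ≠ AlgEquiv.refl) {w : K} (hfix : σ w = w) :
    w ∈ Set.range (algebraMap F K) := by
  by_contra hw
  apply hσ
  ext z
  obtain ⟨s, t, rfl⟩ := cay_repr hdim hw z
  simp [map_add, map_mul, AlgEquiv.commutes, hfix]

lemma cay_key (hdim : Module.finrank F K = 2) {σ : K ≃ₐ[F] K}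
    (hσ : σ ≠ AlgEquiv.refl) {w : K} (hw : w ∉ Set.range (algebraMap F K)) :
    ∃ s t : F, σ w = algebraMap F K t - w ∧ w * σ w = algebraMap F K s := by
  obtain ⟨s, t, hst⟩ := cay_repr hdim hw (w * w)
  have hne : σ w ≠ w := fun h => hw (cay_fixed hdim hσ h)
  have h2 : σ w * σ w = algebraMap F K s + algebraMap F K t * σ w := by
    have := congrArg σ hst
    simpa [map_add, map_mul, AlgEquiv.commutes] using this
  have h3 : (w - σ w) * (w + σ w - algebraMap F K t) = 0 := by
    linear_combination hst - h2
  have h4 : w + σ w - algebraMap F K t = 0 := by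
    rcases mul_eq_zero.mp h3 with h | h
    · exact absurd (sub_eq_zero.mp h).symm hne
    · exact h
  refine ⟨-s, t, by linear_combination h4, ?_⟩
  rw [map_neg]
  linear_combination w * h4 - hst

lemma cay_sigma_sq (hdim : Module.finrank F K = 2) {σ : K ≃ₐ[F] K}
    (hσ : σ ≠ AlgEquiv.refl) (w : K) : σ (σ w) = w := by
  by_cases hw : w ∈ Set.range (algebraMap F K)
  · obtain ⟨a, rfl⟩ := hw
    rw [AlgEquiv.commutes, AlgEquiv.commutes]
  · obtain ⟨s, t, h1, _⟩ := cay_key hdim hσ hw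
    rw [h1, map_sub, AlgEquiv.commutes, h1]
    ring

lemma cay_norm_mem (hdim : Module.finrank F K = 2) {σ : K ≃ₐ[F] K}
    (hσ : σ ≠ AlgEquiv.refl) (w : K) :
    w * σ w ∈ Set.range (algebraMap F K) := by
  by_cases hw : w ∈ Set.range (algebraMap F K)
  · obtain ⟨a, rfl⟩ := hw
    exact ⟨a * a, by rw [map_mul, AlgEquiv.commutes]⟩
  · obtain ⟨s, t, _, h2⟩ := cay_key hdim hσ hw
    exact ⟨s, h2.symm⟩

end Aux

/-- The nonassociative quaternion algebra `Cay(K,b)` is a division algebra over `F`: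
for every nonzero `x`, the left multiplication `λ_x : y ↦ x·y` and the right
multiplication `ρ_x : y ↦ y·x` are bijective. -/
theorem cay_division_algebra {F K : Type*} [Field F] [Field K] [Algebra F K]
    (hchar : ringChar F ≠ 2)
    (hdim : Module.finrank F K = 2)
    (σ : K ≃ₐ[F] K) (hσ : σ ≠ AlgEquiv.refl)
    (b : K) (hb : b ∉ Set.range (algebraMap F K))
    (x : K × K) (hx : x ≠ 0) :
    Function.Bijective (fun y : K × K => cayMul σ b x y) ∧
    Function.Bijective (fun y : K × K => cayMul σ b y x) := by
  have hfd : FiniteDimensional F K := FiniteDimensional.of_finrank_eq_succ hdim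
  have hx' : x.1 ≠ 0 ∨ x.2 ≠ 0 := by
    by_contra h
    push_neg at h
    exact hx (Prod.ext h.1 h.2)
  -- the key contradiction: b = (x.1 * σ x.1) / (x.2 * σ x.2) is impossible
  have hbkey : ∀ hx2 : x.2 ≠ 0, b * (x.2 * σ x.2) ≠ x.1 * σ x.1 := by
    intro hx2 heq
    apply hb
    have hσx2 : σ x.2 ≠ 0 := fun h => hx2 (by simpa using congrArg σ.symm h)
    have hb' : b = (x.1 / x.2) * σ (x.1 / x.2) := by
      rw [map_div₀]
      field_simp
      linear_combination heq
    rw [hb']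
    exact cay_norm_mem hdim hσ _
  have prodeq : ∀ y : K × K, y.1 = 0 → y.2 = 0 → y = 0 := by
    intro y h1 h2
    apply Prod.ext <;> simp [h1, h2]
  constructor
  · -- left multiplication
    let L : K × K →ₗ[F] K × K :=
      { toFun := fun y => cayMul σ b x y
        map_add' := by
          intro y z
          apply Prod.ext <;>
            simp only [cayMul, Prod.fst_add, Prod.snd_add] <;> ring
        map_smul' := by
          intro a y
          apply Prod.ext <;>
            simp only [cayMul, Prod.smul_fst, Prod.smul_snd, RingHom.id_apply,
              Algebra.smul_def (A := K)] <;> ring }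
    have hinj : Function.Injective L := by
      rw [injective_iff_map_eq_zero]
      intro y hy
      have h1 : x.1 * y.1 + b * y.2 * σ x.2 = 0 := congrArg Prod.fst hy
      have h2 : σ x.1 * y.2 + y.1 * x.2 = 0 := congrArg Prod.snd hy
      by_cases hx2 : x.2 = 0
      · have hx1 : x.1 ≠ 0 := hx'.resolve_right (by simp [hx2])
        have hσx1 : σ x.1 ≠ 0 := fun h => hx1 (by simpa using congrArg σ.symm h)
        rw [hx2, map_zero, mul_zero, add_zero] at h1
        rw [hx2, mul_zero, add_zero] at h2
        refine prodeq y ?_ ?_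
        · rcases mul_eq_zero.mp h1 with h | h
          · exact absurd h hx1
          · exact h
        · rcases mul_eq_zero.mp h2 with h | h
          · exact absurd h hσx1
          · exact h
      · by_cases hy2 : y.2 = 0
        · rw [hy2, mul_zero, zero_add] at h2
          refine prodeq y ?_ hy2
          rcases mul_eq_zero.mp h2 with h | h
          · exact h
          · exact absurd h hx2
        · exfalso
          apply hbkey hx2
          have h3 : y.2 * (b * (x.2 * σ x.2) - x.1 * σ x.1) = 0 := by
            linear_combination x.2 * h1 - x.1 * h2
          rcases mul_eq_zero.mp h3 with h | h
          · exact absurd h hy2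
          · linear_combination h
    exact ⟨hinj, LinearMap.injective_iff_surjective.mp hinj⟩
  · -- right multiplication
    let R : K × K →ₗ[F] K × K :=
      { toFun := fun y => cayMul σ b y x
        map_add' := by
          intro y z
          apply Prod.ext <;>
            simp only [cayMul, Prod.fst_add, Prod.snd_add, map_add] <;> ring
        map_smul' := by
          intro a y
          apply Prod.ext <;>
            simp only [cayMul, Prod.smul_fst, Prod.smul_snd, RingHom.id_apply,
              Algebra.smul_def (A := K), map_mul, AlgEquiv.commutes] <;> ring }
    have hinj : Function.Injective R := by
      rw [injective_iff_map_eq_zero]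
      intro y hy
      have h1 : y.1 * x.1 + b * x.2 * σ y.2 = 0 := congrArg Prod.fst hy
      have h2 : σ y.1 * x.2 + x.1 * y.2 = 0 := congrArg Prod.snd hy
      by_cases hx2 : x.2 = 0
      · have hx1 : x.1 ≠ 0 := hx'.resolve_right (by simp [hx2])
        rw [hx2, mul_zero, zero_mul, add_zero] at h1
        rw [hx2, mul_zero, zero_add] at h2
        refine prodeq y ?_ ?_
        · rcases mul_eq_zero.mp h1 with h | h
          · exact h
          · exact absurd h hx1
        · rcases mul_eq_zero.mp h2 with h | h
          · exact absurd h hx1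
          · exact h
      · have hσx2 : σ x.2 ≠ 0 := fun h => hx2 (by simpa using congrArg σ.symm h)
        have h2' : y.1 * σ x.2 + σ x.1 * σ y.2 = 0 := by
          have := congrArg σ h2
          simpa [map_add, map_mul, cay_sigma_sq hdim hσ] using this
        by_cases hy2 : y.2 = 0
        · rw [hy2, map_zero, mul_zero, add_zero] at h2'
          refine prodeq y ?_ hy2
          rcases mul_eq_zero.mp h2' with h | h
          · exact h
          · exact absurd h hσx2
        · exfalso
          apply hbkey hx2
          have hσy2 : σ y.2 ≠ 0 := fun h => hy2 (by simpa using congrArg σ.symm h)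
          have h3 : σ y.2 * (b * (x.2 * σ x.2) - x.1 * σ x.1) = 0 := by
            linear_combination σ x.2 * h1 - x.1 * h2'
          rcases mul_eq_zero.mp h3 with h | h
          · exact absurd h hσy2
          · linear_combination h
    exact ⟨hinj, LinearMap.injective_iff_surjective.mp hinj⟩
end

section
/- Let F be a field of characteristic not 2, K a quadratic field extension of F with nontrivial F-automorphism σ, and b ∈ K \ F. For x0, x1 ∈ K, the determinant of the 2×2 matrix over K with rows (x0, b·σ(x1)) and (x1, σ(x0)) equals x0·σ(x0) − b·x1·σ(x1), and this determinant is nonzero whenever (x0, x1) ≠ (0, 0). -/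
/-!
A quadratic extension with a nontrivial automorphism `σ` is Galois with group `{1, σ}`, so
`x * σ x` is the image of the norm `N x ∈ F`. The determinant is `N x0 - b * N x1`; if it vanished
with `x1 ≠ 0`, then `b = N x0 / N x1` would lie in `F`, and if `x1 = 0` then `N x0 = 0` forces `x0 = 0`.
-/

open Module

section

variable {F K : Type*} [Field F] [Field K] [Algebra F K]

theorem isGalois_of_finrank_eq_two (hdim : finrank F K = 2) {σ : Gal(K/F)} (hσ : σ ≠ 1) :
    IsGalois F K := by
  have : FiniteDimensional F K := .of_finrank_pos (by omega)
  have hge : 2 ≤ Fintype.card Gal(K/F) := Fintype.one_lt_card_iff.mpr ⟨1, σ, hσ.symm⟩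
  have hle : Fintype.card Gal(K/F) ≤ finrank F K := AlgEquiv.card_le
  refine IsGalois.of_card_aut_eq_finrank F K ?_
  rw [Nat.card_eq_fintype_card]
  omega

open scoped Classical in
theorem algebraMap_norm_eq_mul_apply_of_finrank_eq_two (hdim : finrank F K = 2)
    {σ : Gal(K/F)} (hσ : σ ≠ 1) (x : K) :
    algebraMap F K (Algebra.norm F x) = x * σ x := by
  have : FiniteDimensional F K := .of_finrank_pos (by omega)
  have := isGalois_of_finrank_eq_two hdim hσ
  have huniv : ({1, σ} : Finset Gal(K/F)) = Finset.univ := by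
    refine Finset.eq_univ_of_card _ ?_
    rw [Finset.card_pair hσ.symm, ← hdim, ← IsGalois.card_aut_eq_finrank,
      Nat.card_eq_fintype_card]
  rw [Algebra.norm_eq_prod_automorphisms, ← huniv, Finset.prod_pair hσ.symm, AlgEquiv.one_apply]

theorem algebraMap_norm_sub_mul_algebraMap_norm_ne_zero [FiniteDimensional F K] {b : K}
    (hb : b ∉ Set.range (algebraMap F K)) {x0 x1 : K} (hx : (x0, x1) ≠ (0, 0)) :
    algebraMap F K (Algebra.norm F x0) - b * algebraMap F K (Algebra.norm F x1) ≠ 0 := by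
  intro h
  by_cases hx1 : x1 = 0
  · have hx0 : x0 ≠ 0 := fun hx0 => hx (by rw [hx0, hx1])
    simp only [hx1, Algebra.norm_zero, map_zero, mul_zero, sub_zero,
      FaithfulSMul.algebraMap_eq_zero_iff, Algebra.norm_eq_zero_iff] at h
    exact hx0 h
  · have hN : algebraMap F K (Algebra.norm F x1) ≠ 0 := by
      simpa only [ne_eq, FaithfulSMul.algebraMap_eq_zero_iff, Algebra.norm_eq_zero_iff]
    refine hb ⟨Algebra.norm F x0 / Algebra.norm F x1, ?_⟩
    rw [map_div₀, div_eq_iff hN]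
    linear_combination h

end

theorem cay_codeword_det_general {F K : Type*} [Field F] [Field K] [Algebra F K]
    (hdim : Module.finrank F K = 2)
    (σ : K ≃ₐ[F] K) (hσ : σ ≠ AlgEquiv.refl)
    (b : K) (hb : b ∉ Set.range (algebraMap F K))
    (x0 x1 : K) :
    (!![x0, b * σ x1; x1, σ x0]).det = x0 * σ x0 - b * (x1 * σ x1) ∧
    ((x0, x1) ≠ (0, 0) → (!![x0, b * σ x1; x1, σ x0]).det ≠ 0) := by
  have : FiniteDimensional F K := .of_finrank_pos (by omega)
  have hdet : (!![x0, b * σ x1; x1, σ x0]).det = x0 * σ x0 - b * (x1 * σ x1) := by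
    rw [Matrix.det_fin_two_of]
    ring
  refine ⟨hdet, fun hx => ?_⟩
  rw [hdet, ← algebraMap_norm_eq_mul_apply_of_finrank_eq_two hdim hσ,
    ← algebraMap_norm_eq_mul_apply_of_finrank_eq_two hdim hσ]
  exact algebraMap_norm_sub_mul_algebraMap_norm_ne_zero hb hx

/-- Let `K/F` be a quadratic field extension (characteristic not 2) with nontrivial
`F`-automorphism `σ`, and `b ∈ K \ F`. The determinant of the 2×2 matrix with rows
`(x0, b·σ(x1))` and `(x1, σ(x0))` equals `x0·σ(x0) − b·x1·σ(x1)`, and it is nonzero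
whenever `(x0, x1) ≠ (0,0)`. -/
theorem cay_codeword_det {F K : Type*} [Field F] [Field K] [Algebra F K]
    (hchar : ringChar F ≠ 2)
    (hdim : Module.finrank F K = 2)
    (σ : K ≃ₐ[F] K) (hσ : σ ≠ AlgEquiv.refl)
    (b : K) (hb : b ∉ Set.range (algebraMap F K))
    (x0 x1 : K) :
    (!![x0, b * σ x1; x1, σ x0]).det = x0 * σ x0 - b * (x1 * σ x1) ∧
    ((x0, x1) ≠ (0, 0) → (!![x0, b * σ x1; x1, σ x0]).det ≠ 0) :=
  cay_codeword_det_general hdim σ hσ b hb x0 x1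
end

section
/- Let m be a negative square-free integer, K = ℚ(√m) with nontrivial automorphism σ and ring of integers O_K, and fix a field embedding φ : K → ℂ. Let b ∈ K \ ℚ and write b = b_n / b_d with b_n, b_d ∈ O_K and b_d ≠ 0. Then for all u, v ∈ O_K with (u, v) ≠ (0, 0), one has |φ(u·σ(u) − b·v·σ(v))|² ≥ 1 / |φ(b_d)|². In particular, the code obtained from the nonassociative quaternion algebra Cay(K,b) by restricting entries to O_K has non-vanishing determinant. -/
/-!
For the nontrivial automorphism `σ` of the quadratic extension `K/ℚ`, `x σ(x) = N(x)` is
rational, so `N(u) - b N(v)` vanishes only for `u = v = 0`, because `b ∉ ℚ`. Clearing the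
denominator, `b_d (N(u) - b N(v)) = b_d N(u) - b_n N(v)` is a nonzero algebraic integer. As `K`
is imaginary quadratic, the place of `φ` is its only infinite place and it is complex, so the
product formula gives `|φ(x)|² = |N(x)|` on `K`, which is at least `1` on nonzero integers.
-/

open NumberField

theorem Algebra.algebraMap_norm_eq_mul_of_finrank_eq_two {F K : Type*} [Field F] [Field K]
    [Algebra F K] (h : Module.finrank F K = 2) {σ : K ≃ₐ[F] K} (hσ : σ ≠ 1) (x : K) :
    algebraMap F K (Algebra.norm F x) = x * σ x := by
  classical
  have : FiniteDimensional F K := Module.finite_of_finrank_eq_succ h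
  have hcard : Fintype.card (K ≃ₐ[F] K) = 2 :=
    le_antisymm (h ▸ AlgEquiv.card_le) (Fintype.one_lt_card_iff.mpr ⟨1, σ, hσ.symm⟩)
  have : IsGalois F K :=
    IsGalois.of_card_aut_eq_finrank F K (by rw [Nat.card_eq_fintype_card, hcard, h])
  have huniv : (Finset.univ : Finset (K ≃ₐ[F] K)) = {1, σ} :=
    (Finset.eq_of_subset_of_card_le (Finset.subset_univ _)
      (by rw [Finset.card_univ, hcard, Finset.card_pair hσ.symm])).symm
  rw [Algebra.norm_eq_prod_automorphisms, huniv, Finset.prod_pair hσ.symm, AlgEquiv.one_apply]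

theorem algebraMap_sub_mul_algebraMap_ne_zero {F K : Type*} [Field F] [Field K] [Algebra F K]
    {b : K} (hb : b ∉ Set.range (algebraMap F K)) {p q : F} (hpq : (p, q) ≠ (0, 0)) :
    algebraMap F K p - b * algebraMap F K q ≠ 0 := by
  intro h
  by_cases hq : q = 0
  · subst hq
    exact hpq (by simpa using h)
  · exact hb ⟨p / q, by rw [map_div₀, div_eq_iff (by simpa using hq)]; linear_combination h⟩

namespace NumberField.ComplexEmbedding

theorem not_isReal_of_sq_eq_neg {K : Type*} [Field K] (φ : K →+* ℂ) {s : K} {m : ℤ}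
    (hm : m < 0) (hs : s ^ 2 = m) : ¬ IsReal φ := by
  intro hφ
  have h := congr_arg hφ.embedding hs
  rw [map_pow, map_intCast] at h
  have : (0 : ℝ) ≤ m := h ▸ sq_nonneg _
  exact hm.not_ge (by exact_mod_cast this)

theorem norm_sq_eq_abs_norm_of_finrank_eq_two {K : Type*} [Field K] [NumberField K]
    (hdim : Module.finrank ℚ K = 2) {φ : K →+* ℂ} (hφ : ¬ IsReal φ) (x : K) :
    ‖φ x‖ ^ 2 = |(Algebra.norm ℚ x : ℝ)| := by
  classical
  have hw : (InfinitePlace.mk φ).IsComplex := InfinitePlace.isComplex_mk_iff.mpr hφ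
  have hcard : Fintype.card (InfinitePlace K) = 1 := by
    have := InfinitePlace.card_add_two_mul_card_eq_rank K
    have : 0 < InfinitePlace.nrComplexPlaces K := Fintype.card_pos_iff.mpr ⟨⟨_, hw⟩⟩
    rw [InfinitePlace.card_eq_nrRealPlaces_add_nrComplexPlaces]
    omega
  have hprod := InfinitePlace.prod_eq_abs_norm x
  rw [Fintype.prod_eq_single _ fun w hw => (hw (Fintype.card_le_one_iff.mp hcard.le w _)).elim,
    hw.mult_eq_two, InfinitePlace.apply] at hprod
  rw [hprod, Rat.cast_abs]

end NumberField.ComplexEmbedding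

theorem NumberField.RingOfIntegers.one_le_abs_norm {K : Type*} [Field K] [NumberField K]
    {x : 𝓞 K} (hx : x ≠ 0) : 1 ≤ |(Algebra.norm ℚ (x : K) : ℝ)| := by
  rw [← Algebra.coe_norm_int, Rat.cast_intCast, ← Int.cast_abs, ← Int.cast_one, Int.cast_le]
  exact Int.one_le_abs (Algebra.norm_ne_zero_iff.mpr hx)

theorem cay_code_nvd_imaginary_quadratic_general {K : Type*} [Field K] [NumberField K]
    (hdim : Module.finrank ℚ K = 2)
    (m : ℤ) (hm : m < 0)
    (s : K) (hs : s ^ 2 = (m : K))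
    (σ : K ≃ₐ[ℚ] K) (hσ : σ ≠ AlgEquiv.refl)
    (b : K) (hb : b ∉ Set.range (algebraMap ℚ K))
    (b_n b_d : 𝓞 K) (hbd : (b_d : K) ≠ 0) (hbe : (b_n : K) = b * (b_d : K))
    (φ : K →+* ℂ) :
    ∀ u v : 𝓞 K, (u, v) ≠ (0, 0) →
      1 / ‖φ (b_d : K)‖ ^ 2 ≤
        ‖φ ((u : K) * σ (u : K) - b * ((v : K) * σ (v : K)))‖ ^ 2 := by
  intro u v huv
  have hnorm := Algebra.algebraMap_norm_eq_mul_of_finrank_eq_two hdim hσ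
  have hd : (u : K) * σ u - b * ((v : K) * σ v) ≠ 0 := by
    rw [← hnorm, ← hnorm]
    refine algebraMap_sub_mul_algebraMap_ne_zero hb ?_
    simpa [Algebra.norm_eq_zero_iff] using huv
  let W : 𝓞 K := b_d * algebraMap ℤ (𝓞 K) (Algebra.norm ℤ u) -
    b_n * algebraMap ℤ (𝓞 K) (Algebra.norm ℤ v)
  have hW : (W : K) = b_d * ((u : K) * σ u - b * ((v : K) * σ v)) := by
    simp only [W, algebraMap_int_eq, eq_intCast, map_sub, map_mul, map_intCast, hbe, ← hnorm,
      ← Algebra.coe_norm_int]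
    ring
  have hW0 : W ≠ 0 := fun h => mul_ne_zero hbd hd (by rw [← hW, h]; rfl)
  have hφ := ComplexEmbedding.not_isReal_of_sq_eq_neg φ hm hs
  rw [div_le_iff₀' (pow_pos (norm_pos_iff.mpr ((map_ne_zero φ).mpr hbd)) 2), ← mul_pow,
    ← norm_mul, ← map_mul, ← hW, ComplexEmbedding.norm_sq_eq_abs_norm_of_finrank_eq_two hdim hφ]
  exact RingOfIntegers.one_le_abs_norm hW0

/-- Let `K = ℚ(√m)` be an imaginary quadratic field (`m` a negative square-free integer)
with nontrivial automorphism `σ`, ring of integers `𝓞 K` and a fixed embedding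
`φ : K → ℂ`. Let `b ∈ K \ ℚ`, written as `b = b_n / b_d` with `b_n, b_d ∈ 𝓞 K`,
`b_d ≠ 0`. Then for all `u, v ∈ 𝓞 K` not both zero,
`|φ(u·σ(u) − b·v·σ(v))|² ≥ 1 / |φ(b_d)|²`: the code obtained from the nonassociative
quaternion algebra `Cay(K,b)` by restricting entries to `𝓞 K` has non-vanishing
determinant. -/
theorem cay_code_nvd_imaginary_quadratic {K : Type*} [Field K] [NumberField K]
    (hdim : Module.finrank ℚ K = 2)
    (m : ℤ) (hm : m < 0) (hmsf : Squarefree m)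
    (s : K) (hs : s ^ 2 = (m : K))
    (σ : K ≃ₐ[ℚ] K) (hσ : σ ≠ AlgEquiv.refl)
    (b : K) (hb : b ∉ Set.range (algebraMap ℚ K))
    (b_n b_d : 𝓞 K) (hbd : (b_d : K) ≠ 0) (hbe : (b_n : K) = b * (b_d : K))
    (φ : K →+* ℂ) :
    ∀ u v : 𝓞 K, (u, v) ≠ (0, 0) →
      1 / ‖φ (b_d : K)‖ ^ 2 ≤
        ‖φ ((u : K) * σ (u : K) - b * ((v : K) * σ (v : K)))‖ ^ 2 :=
  cay_code_nvd_imaginary_quadratic_general hdim m hm s hs σ hσ b hb b_n b_d hbd hbe φ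
end

section
/- Let R be a commutative ring and let a, p, q, x0, x1, x2, x3 ∈ R. The determinant of the 4×4 matrix with rows (x0, a·x1, p·x2 − a·q·x3, a·q·x2 − a·p·x3), (x1, x0, q·x2 − p·x3, p·x2 − a·q·x3), (x2, a·x3, x0, −a·x1), (x3, x2, −x1, x0) equals ((x0² − a·x1²) − p·(x2² − a·x3²))² − a·q²·(x2² − a·x3²)². -/
namespace Matrix

variable {R : Type*} [CommRing R]

theorem det_fin_four (A : Matrix (Fin 4) (Fin 4) R) :
    det A =
      A 0 0 * (A 1 1 * A 2 2 * A 3 3 - A 1 1 * A 2 3 * A 3 2 - A 1 2 * A 2 1 * A 3 3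
        + A 1 2 * A 2 3 * A 3 1 + A 1 3 * A 2 1 * A 3 2 - A 1 3 * A 2 2 * A 3 1)
      - A 0 1 * (A 1 0 * A 2 2 * A 3 3 - A 1 0 * A 2 3 * A 3 2 - A 1 2 * A 2 0 * A 3 3
        + A 1 2 * A 2 3 * A 3 0 + A 1 3 * A 2 0 * A 3 2 - A 1 3 * A 2 2 * A 3 0)
      + A 0 2 * (A 1 0 * A 2 1 * A 3 3 - A 1 0 * A 2 3 * A 3 1 - A 1 1 * A 2 0 * A 3 3
        + A 1 1 * A 2 3 * A 3 0 + A 1 3 * A 2 0 * A 3 1 - A 1 3 * A 2 1 * A 3 0)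
      - A 0 3 * (A 1 0 * A 2 1 * A 3 2 - A 1 0 * A 2 2 * A 3 1 - A 1 1 * A 2 0 * A 3 2
        + A 1 1 * A 2 2 * A 3 0 + A 1 2 * A 2 0 * A 3 1 - A 1 2 * A 2 1 * A 3 0) := by
  simp only [det_succ_row_zero A, Fin.sum_univ_four, det_fin_three, submatrix_apply,
    Fin.succAbove, Fin.reduceSucc, Fin.reduceCastSucc, Fin.reduceLT, Fin.coe_ofNat_eq_mod,
    ite_true, ite_false]
  ring

end Matrix

/-- Determinant of the left regular representation matrix of
`x0 + x1·i + x2·j − x3·ij` in the nonassociative quaternion algebra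
`Cay(F(√a), p + q√a)` with respect to the basis `{1, i, j, −ij}`:
it equals `((x0² − a·x1²) − p·(x2² − a·x3²))² − a·q²·(x2² − a·x3²)²`. -/
theorem cay_four_by_four_det {R : Type*} [CommRing R] (a p q x0 x1 x2 x3 : R) :
    (!![x0, a * x1, p * x2 - a * q * x3, a * q * x2 - a * p * x3;
        x1, x0, q * x2 - p * x3, p * x2 - a * q * x3;
        x2, a * x3, x0, -(a * x1);
        x3, x2, -x1, x0]).det =
      ((x0 ^ 2 - a * x1 ^ 2) - p * (x2 ^ 2 - a * x3 ^ 2)) ^ 2 -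
        a * q ^ 2 * (x2 ^ 2 - a * x3 ^ 2) ^ 2 := by
  rw [Matrix.det_fin_four]
  simp only [Matrix.of_apply, Matrix.cons_val', Matrix.cons_val_zero, Matrix.cons_val_one,
    Matrix.cons_val, Matrix.cons_val_fin_one]
  ring
end

section
/- Let F be either ℚ or an imaginary quadratic field, with ring of integers O_F, and fix a field embedding φ : F → ℂ. Let a ∈ O_F be square-free and not a square in F, and let p, q ∈ F with q ≠ 0; write p = p_n / p_d and q = q_n / q_d with p_n, p_d, q_n, q_d ∈ O_F and p_d, q_d ≠ 0. Then for every nonzero tuple (x0, x1, x2, x3) ∈ O_F⁴, one has |φ( ((x0² − a·x1²) − p·(x2² − a·x3²))² − a·q²·(x2² − a·x3²)² )|² ≥ 1 / |φ(p_d·q_d)|⁴. In particular, the 4×4 code obtained from Cay(F(√a), p + q√a) by restricting the information symbols to O_F satisfies the non-vanishing determinant property. -/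
open NumberField

/-! The determinant is the norm form `u² - a v²` at `u = N(x0, x1) - p N(x2, x3)`,
`v = q N(x2, x3)`, where `N(s, t) = s² - a t²` is again that norm form. As `a` is not a square,
the form is anisotropic, so a nonzero codeword has nonzero determinant. Multiplying by
`(p_d q_d)²` makes the determinant a nonzero algebraic integer, and in a number field with a
single infinite place (`ℚ` or an imaginary quadratic field) the product formula for the norm
gives every nonzero algebraic integer absolute value at least `1` under any embedding. -/

/-- The determinant of the codeword of `Cay(F(√a), p + q√a)` with symbols `x0, x1, x2, x3`. -/
def cayDet {K : Type*} [Field K] (a p q x0 x1 x2 x3 : K) : K :=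
  ((x0 ^ 2 - a * x1 ^ 2) - p * (x2 ^ 2 - a * x3 ^ 2)) ^ 2 -
    a * q ^ 2 * (x2 ^ 2 - a * x3 ^ 2) ^ 2

section Field

variable {K : Type*} [Field K] {a : K}

theorem eq_zero_of_sq_sub_mul_sq_eq_zero (ha : ¬∃ y : K, y ^ 2 = a) {u v : K}
    (h : u ^ 2 - a * v ^ 2 = 0) : u = 0 ∧ v = 0 := by
  have hv : v = 0 := by
    by_contra hv
    exact ha ⟨u / v, by field_simp; linear_combination h⟩
  subst hv
  exact ⟨pow_eq_zero_iff two_ne_zero |>.mp (by linear_combination h), rfl⟩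

theorem cayDet_eq_zero_iff (ha : ¬∃ y : K, y ^ 2 = a) {p q : K} (hq : q ≠ 0)
    {x0 x1 x2 x3 : K} :
    cayDet a p q x0 x1 x2 x3 = 0 ↔ x0 = 0 ∧ x1 = 0 ∧ x2 = 0 ∧ x3 = 0 := by
  refine ⟨fun h ↦ ?_, by rintro ⟨rfl, rfl, rfl, rfl⟩; simp [cayDet]⟩
  obtain ⟨hu, hv⟩ := eq_zero_of_sq_sub_mul_sq_eq_zero ha
    (u := (x0 ^ 2 - a * x1 ^ 2) - p * (x2 ^ 2 - a * x3 ^ 2)) (v := q * (x2 ^ 2 - a * x3 ^ 2))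
    (by rw [cayDet] at h; linear_combination h)
  have h23 := eq_zero_of_sq_sub_mul_sq_eq_zero ha ((mul_eq_zero.mp hv).resolve_left hq)
  have h01 := eq_zero_of_sq_sub_mul_sq_eq_zero ha (u := x0) (v := x1) (by
    simpa [h23.1, h23.2] using hu)
  exact ⟨h01.1, h01.2, h23.1, h23.2⟩

end Field

theorem exists_algebraMap_eq_sq_mul_cayDet {R K : Type*} [CommRing R] [Field K] [Algebra R K]
    (a p_n p_d q_n q_d x0 x1 x2 x3 : R) (hpd : algebraMap R K p_d ≠ 0)
    (hqd : algebraMap R K q_d ≠ 0) :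
    ∃ z : R, algebraMap R K z = (algebraMap R K p_d * algebraMap R K q_d) ^ 2 *
      cayDet (algebraMap R K a) (algebraMap R K p_n / algebraMap R K p_d)
        (algebraMap R K q_n / algebraMap R K q_d) (algebraMap R K x0) (algebraMap R K x1)
        (algebraMap R K x2) (algebraMap R K x3) := by
  refine ⟨(q_d * (p_d * (x0 ^ 2 - a * x1 ^ 2) - p_n * (x2 ^ 2 - a * x3 ^ 2))) ^ 2 -
      a * p_d ^ 2 * q_n ^ 2 * (x2 ^ 2 - a * x3 ^ 2) ^ 2, ?_⟩
  simp only [cayDet, map_sub, map_mul, map_pow]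
  field_simp

theorem NumberField.InfinitePlace.subsingleton_of_finrank {K : Type*} [Field K] [NumberField K]
    (hK : Module.finrank ℚ K = 1 ∨
      (Module.finrank ℚ K = 2 ∧ ∀ w : InfinitePlace K, w.IsComplex)) :
    Subsingleton (InfinitePlace K) := by
  rw [← Fintype.card_le_one_iff_subsingleton, card_eq_nrRealPlaces_add_nrComplexPlaces]
  rcases hK with h | ⟨h, hcomplex⟩
  · rw [nrRealPlaces_eq_one_of_finrank_eq_one h, nrComplexPlaces_eq_zero_of_finrank_eq_one h]
  · have : IsTotallyComplex K := ⟨hcomplex⟩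
    have := IsTotallyComplex.finrank (K := K)
    rw [IsTotallyComplex.nrRealPlaces_eq_zero]
    omega

theorem NumberField.one_le_norm_apply_of_subsingleton {K : Type*} [Field K] [NumberField K]
    [Subsingleton (InfinitePlace K)] (φ : K →+* ℂ) {z : 𝓞 K} (hz : z ≠ 0) :
    1 ≤ ‖φ z‖ := by
  rw [← InfinitePlace.apply]
  exact InfinitePlace.one_le_of_lt_one hz fun w hw ↦ (hw (Subsingleton.elim _ _)).elim

theorem one_div_pow_four_le_sq {c d : ℝ} (hc : 0 < c) (h : 1 ≤ c ^ 2 * d) :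
    1 / c ^ 4 ≤ d ^ 2 := by
  rw [div_le_iff₀ (by positivity)]
  nlinarith

theorem cay_four_by_four_nvd_general {F : Type*} [Field F] [NumberField F]
    (hF : Module.finrank ℚ F = 1 ∨
      (Module.finrank ℚ F = 2 ∧ ∀ w : InfinitePlace F, w.IsComplex))
    (φ : F →+* ℂ)
    (a : 𝓞 F) (hasq : ¬∃ y : F, y ^ 2 = (a : F))
    (p q : F) (hq : q ≠ 0)
    (p_n p_d q_n q_d : 𝓞 F) (hpd : (p_d : F) ≠ 0) (hqd : (q_d : F) ≠ 0)
    (hp : p = (p_n : F) / (p_d : F)) (hq' : q = (q_n : F) / (q_d : F)) :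
    ∀ x0 x1 x2 x3 : 𝓞 F, (x0, x1, x2, x3) ≠ (0, 0, 0, 0) →
      1 / ‖φ ((p_d : F) * (q_d : F))‖ ^ 4 ≤
        ‖φ
          ((((x0 : F) ^ 2 - (a : F) * (x1 : F) ^ 2) -
              p * ((x2 : F) ^ 2 - (a : F) * (x3 : F) ^ 2)) ^ 2 -
            (a : F) * q ^ 2 * ((x2 : F) ^ 2 - (a : F) * (x3 : F) ^ 2) ^ 2)‖ ^ 2 := by
  intro x0 x1 x2 x3 hx
  change 1 / _ ≤ ‖φ (cayDet (a : F) p q x0 x1 x2 x3)‖ ^ 2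
  have hdet : cayDet (a : F) p q x0 x1 x2 x3 ≠ 0 := by
    rw [Ne, cayDet_eq_zero_iff hasq hq]
    simpa [RingOfIntegers.coe_eq_zero_iff] using hx
  subst hp hq'
  obtain ⟨z, hz⟩ := exists_algebraMap_eq_sq_mul_cayDet a p_n p_d q_n q_d x0 x1 x2 x3 hpd hqd
  have hz0 : z ≠ 0 := by
    rintro rfl
    simp_all
  have := InfinitePlace.subsingleton_of_finrank hF
  have hone := one_le_norm_apply_of_subsingleton φ hz0
  rw [RingOfIntegers.coe_eq_algebraMap, hz, map_mul, norm_mul, map_pow, norm_pow] at hone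
  exact one_div_pow_four_le_sq (norm_pos_iff.mpr ((map_ne_zero φ).mpr (mul_ne_zero hpd hqd))) hone

/-- Let `F` be `ℚ` or an imaginary quadratic field with ring of integers `𝓞 F` and a
fixed embedding `φ : F → ℂ`. Let `a ∈ 𝓞 F` be square-free and not a square in `F`, and
`p, q ∈ F` with `q ≠ 0`, written `p = p_n/p_d`, `q = q_n/q_d` with numerators and
denominators in `𝓞 F`, denominators nonzero. Then for every nonzero tuple
`(x0,x1,x2,x3) ∈ (𝓞 F)⁴`, the squared absolute value of the determinant of the
corresponding codeword of the 4×4 code built from `Cay(F(√a), p + q√a)` is at least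
`1 / |φ(p_d·q_d)|⁴`: the code satisfies the non-vanishing determinant property. -/
theorem cay_four_by_four_nvd {F : Type*} [Field F] [NumberField F]
    (hF : Module.finrank ℚ F = 1 ∨
      (Module.finrank ℚ F = 2 ∧ ∀ w : InfinitePlace F, w.IsComplex))
    (φ : F →+* ℂ)
    (a : 𝓞 F) (hasf : Squarefree a) (hasq : ¬∃ y : F, y ^ 2 = (a : F))
    (p q : F) (hq : q ≠ 0)
    (p_n p_d q_n q_d : 𝓞 F) (hpd : (p_d : F) ≠ 0) (hqd : (q_d : F) ≠ 0)
    (hp : p = (p_n : F) / (p_d : F)) (hq' : q = (q_n : F) / (q_d : F)) :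
    ∀ x0 x1 x2 x3 : 𝓞 F, (x0, x1, x2, x3) ≠ (0, 0, 0, 0) →
      1 / ‖φ ((p_d : F) * (q_d : F))‖ ^ 4 ≤
        ‖φ
          ((((x0 : F) ^ 2 - (a : F) * (x1 : F) ^ 2) -
              p * ((x2 : F) ^ 2 - (a : F) * (x3 : F) ^ 2)) ^ 2 -
            (a : F) * q ^ 2 * ((x2 : F) ^ 2 - (a : F) * (x3 : F) ^ 2) ^ 2)‖ ^ 2 :=
  cay_four_by_four_nvd_general hF φ a hasq p q hq p_n p_d q_n q_d hpd hqd hp hq'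
end

section
/- The minimum over all pairs (u, v) ∈ ℤ[i]² with (u, v) ≠ (0, 0) of the quantity |u·conj(u) − i·v·conj(v)|² equals 1; that is, the nonassociative Alamouti-type 2×2 code obtained from Cay(ℚ(i), i) by restricting entries to ℤ[i] has minimum determinant 1 and hence satisfies the non-vanishing determinant property. -/
/-! Since `u · conj u = N(u)` is real, the determinant `N(u) - i N(v)` has squared modulus
`N(u)² + N(v)²`, a sum of squares of integers that is positive unless `u = v = 0`, and `(1, 0)`
attains the value `1`. -/

open Complex ComplexConjugate

theorem Complex.norm_ofReal_sub_I_mul_ofReal_sq (a b : ℝ) :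
    ‖(a : ℂ) - I * b‖ ^ 2 = a ^ 2 + b ^ 2 := by
  rw [Complex.sq_norm, normSq_apply]
  simp only [sub_re, ofReal_re, mul_re, I_re, I_im, ofReal_im, sub_im, mul_im]
  ring

namespace GaussianInt

theorem toComplex_mul_conj (x : GaussianInt) : (x : ℂ) * conj (x : ℂ) = ((x.norm : ℝ) : ℂ) := by
  rw [mul_conj, intCast_real_norm]

theorem norm_toComplex_mul_conj_sub_I_mul_sq (u v : GaussianInt) :
    ‖(u : ℂ) * conj (u : ℂ) - I * ((v : ℂ) * conj (v : ℂ))‖ ^ 2 =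
      ((u.norm ^ 2 + v.norm ^ 2 : ℤ) : ℝ) := by
  rw [toComplex_mul_conj, toComplex_mul_conj, Complex.norm_ofReal_sub_I_mul_ofReal_sq]
  push_cast
  rfl

theorem one_le_norm_sq_add_norm_sq {u v : GaussianInt} (h : (u, v) ≠ (0, 0)) :
    1 ≤ u.norm ^ 2 + v.norm ^ 2 := by
  have hne : u ≠ 0 ∨ v ≠ 0 := by simpa only [Ne, Prod.mk.injEq, not_and_or] using h
  rcases hne with hu | hv
  · nlinarith [pow_pos (norm_pos.2 hu) 2, sq_nonneg v.norm]
  · nlinarith [pow_pos (norm_pos.2 hv) 2, sq_nonneg u.norm]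

end GaussianInt

/-- The minimum over all pairs `(u,v)` of Gaussian integers with `(u,v) ≠ (0,0)` of
`|u·conj(u) − i·v·conj(v)|²` equals `1`: the nonassociative Alamouti-type 2×2 code
obtained from `Cay(ℚ(i), i)` by restricting entries to `ℤ[i]` has minimum determinant
`1` and hence satisfies the non-vanishing determinant property. -/
theorem cay_alamouti_min_det :
    IsLeast {y : ℝ | ∃ u v : GaussianInt, (u, v) ≠ (0, 0) ∧
      y = ‖
        (GaussianInt.toComplex u * (starRingEnd ℂ) (GaussianInt.toComplex u) -
          I * (GaussianInt.toComplex v * (starRingEnd ℂ) (GaussianInt.toComplex v)))‖ ^ 2}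
      1 := by
  refine ⟨⟨1, 0, by simp, by simp⟩, ?_⟩
  rintro y ⟨u, v, huv, rfl⟩
  rw [GaussianInt.norm_toComplex_mul_conj_sub_I_mul_sq]
  exact_mod_cast GaussianInt.one_le_norm_sq_add_norm_sq huv
end

section
/- Let F be a field of characteristic not 2, K a quadratic field extension of F with nontrivial F-automorphism σ, and b ∈ K \ F. Then the nonassociative quaternion algebra Cay(K,b) is not third power-associative: for the element j = (0, 1), one has (j·j)·j = (0, σ(b)) while j·(j·j) = (0, b), and these are distinct since b ∉ F. -/
lemma sigma_b_ne_b {F K : Type*} [Field F] [Field K] [Algebra F K]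
    (hdim : Module.finrank F K = 2)
    (σ : K ≃ₐ[F] K) (hσ : σ ≠ AlgEquiv.refl)
    (b : K) (hb : b ∉ Set.range (algebraMap F K)) : σ b ≠ b := by
  intro hfix
  apply hσ
  have hli : LinearIndependent F ![(1 : K), b] := by
    rw [LinearIndependent.pair_iff]
    intro s t hst
    rcases eq_or_ne t 0 with ht | ht
    · subst ht
      simp only [smul_zero, add_zero, smul_eq_mul, zero_smul] at hst
      have hs : algebraMap F K s = 0 := by
        simpa [Algebra.smul_def] using hst
      exact ⟨(map_eq_zero _).mp hs, rfl⟩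
    · exfalso
      apply hb
      refine ⟨-s / t, ?_⟩
      have hst' : algebraMap F K s + algebraMap F K t * b = 0 := by
        simpa [Algebra.smul_def] using hst
      have ht' : algebraMap F K t ≠ 0 := fun h => ht ((map_eq_zero _).mp h)
      rw [map_div₀, map_neg, div_eq_iff ht']
      linear_combination -hst'
  have hB : Fintype.card (Fin 2) = Module.finrank F K := by simp [hdim]
  let B := basisOfLinearIndependentOfCardEqFinrank hli hB
  have hBdef : ∀ i, B i = ![(1 : K), b] i :=
    fun i => coe_basisOfLinearIndependentOfCardEqFinrank hli hB ▸ rfl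
  have : σ.toLinearMap = (AlgEquiv.refl : K ≃ₐ[F] K).toLinearMap := by
    apply B.ext
    intro i
    fin_cases i <;> simp [hBdef, hfix]
  ext x
  exact congrFun (congrArg (fun f => f.toFun) this) x

/-- The nonassociative quaternion algebra `Cay(K,b)` is not third power-associative:
for `j = (0,1)` one has `(j·j)·j = (0, σ(b))` while `j·(j·j) = (0, b)`, and these are
distinct since `b ∉ F`. -/
theorem cay_not_third_power_associative {F K : Type*} [Field F] [Field K] [Algebra F K]
    (hchar : ringChar F ≠ 2)
    (hdim : Module.finrank F K = 2)
    (σ : K ≃ₐ[F] K) (hσ : σ ≠ AlgEquiv.refl)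
    (b : K) (hb : b ∉ Set.range (algebraMap F K)) :
    cayMul σ b (cayMul σ b ((0, 1) : K × K) (0, 1)) (0, 1) = (0, σ b) ∧
    cayMul σ b ((0, 1) : K × K) (cayMul σ b ((0, 1) : K × K) (0, 1)) = (0, b) ∧
    cayMul σ b (cayMul σ b ((0, 1) : K × K) (0, 1)) (0, 1) ≠
      cayMul σ b ((0, 1) : K × K) (cayMul σ b ((0, 1) : K × K) (0, 1)) := by
  have h1 : cayMul σ b (cayMul σ b ((0, 1) : K × K) (0, 1)) (0, 1) = (0, σ b) := by
    simp [cayMul]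
  have h2 : cayMul σ b ((0, 1) : K × K) (cayMul σ b ((0, 1) : K × K) (0, 1)) = (0, b) := by
    simp [cayMul]
  refine ⟨h1, h2, ?_⟩
  rw [h1, h2]
  intro h
  exact sigma_b_ne_b hdim σ hσ b hb (congrArg Prod.snd h)
end

section
/- Let b = p + i·q and b' be complex numbers not in ℝ. The nonassociative quaternion algebras Cay(ℂ, b) and Cay(ℂ, b') over ℝ are isomorphic as unital ℝ-algebras if and only if b' = t·(p + i·q) or b' = t·(p − i·q) for some positive real number t. -/
open Complex

/-- Multiplication of the nonassociative quaternion algebra `Cay(ℂ, c)` over `ℝ`: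
`(u,v)·(u',v') = (uu' + c·v'·conj(v), conj(u)·v' + u'·v)`. -/
def cayMulC (c : ℂ) (x y : ℂ × ℂ) : ℂ × ℂ :=
  (x.1 * y.1 + c * y.2 * (starRingEnd ℂ) x.2,
   (starRingEnd ℂ) x.1 * y.2 + y.1 * x.2)

/-- Let `b = p + i·q` and `b'` be complex numbers not in `ℝ`. The nonassociative
quaternion algebras `Cay(ℂ, b)` and `Cay(ℂ, b')` over `ℝ` are isomorphic as unital
`ℝ`-algebras if and only if `b' = t·(p + i·q)` or `b' = t·(p − i·q)` for some real
`t > 0`. -/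
theorem cayC_iso_iff (p q : ℝ) (b b' : ℂ)
    (hbpq : b = (p : ℂ) + (q : ℂ) * I)
    (hb : b ∉ Set.range ((↑) : ℝ → ℂ))
    (hb' : b' ∉ Set.range ((↑) : ℝ → ℂ)) :
    (∃ f : (ℂ × ℂ) ≃ₗ[ℝ] ℂ × ℂ,
        f (1, 0) = (1, 0) ∧
        ∀ x y : ℂ × ℂ, f (cayMulC b x y) = cayMulC b' (f x) (f y)) ↔
      ∃ t : ℝ, 0 < t ∧
        (b' = (t : ℂ) * ((p : ℂ) + (q : ℂ) * I) ∨
         b' = (t : ℂ) * ((p : ℂ) - (q : ℂ) * I)) := by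
  constructor
  · rintro ⟨f, hone, hmul⟩
    set e := f ((I : ℂ), (0 : ℂ)) with he
    -- e * e = (-1, 0)
    have hsq1 : cayMulC b ((I : ℂ), (0 : ℂ)) ((I : ℂ), (0 : ℂ))
        = (-1 : ℝ) • ((1 : ℂ), (0 : ℂ)) := by
      simp [cayMulC, Complex.I_mul_I, Prod.ext_iff]
    have h1 : cayMulC b' e e = ((-1 : ℂ), (0 : ℂ)) := by
      rw [← hmul, hsq1, map_smul, hone]
      simp [Prod.ext_iff]
    have hA : e.1 * e.1 + b' * e.2 * (starRingEnd ℂ) e.2 = -1 := by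
      have := congrArg Prod.fst h1
      simpa [cayMulC] using this
    have hB : (starRingEnd ℂ) e.1 * e.2 + e.1 * e.2 = 0 := by
      have := congrArg Prod.snd h1
      simpa [cayMulC] using this
    -- e.2 = 0
    have hβ : e.2 = 0 := by
      by_contra hβ
      have hfac : ((starRingEnd ℂ) e.1 + e.1) * e.2 = 0 := by ring_nf; linear_combination hB
      have hre : (starRingEnd ℂ) e.1 + e.1 = 0 := by
        rcases mul_eq_zero.1 hfac with h | h
        · exact h
        · exact absurd h hβ
      have hre0 : e.1.re = 0 := by
        have := congrArg Complex.re hre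
        simp at this
        linarith
      have hsq : e.1 * e.1 = -((e.1.im : ℂ) ^ 2) := by
        have h2 : e.1 = (e.1.im : ℂ) * I := by
          have := (Complex.re_add_im e.1).symm
          rw [hre0] at this
          simpa using this
        rw [h2]
        ring_nf
        simp [Complex.I_sq]
      have hnsq : Complex.normSq e.2 ≠ 0 := by
        simpa [Complex.normSq_eq_zero] using hβ
      have hmc : e.2 * (starRingEnd ℂ) e.2 = (Complex.normSq e.2 : ℂ) := Complex.mul_conj e.2
      have hval : b' * (Complex.normSq e.2 : ℂ) = (e.1.im : ℂ) ^ 2 - 1 := by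
        rw [← hmc]
        linear_combination hA - hsq
      apply hb'
      refine ⟨(e.1.im ^ 2 - 1) / Complex.normSq e.2, ?_⟩
      have hnsq' : (Complex.normSq e.2 : ℂ) ≠ 0 := by exact_mod_cast hnsq
      push_cast
      rw [div_eq_iff hnsq', eq_comm]
      exact hval
    -- e.1 = ± I
    have hA' : e.1 * e.1 = -1 := by
      have := hA
      rw [hβ] at this
      simpa using this
    have hα : e.1 = I ∨ e.1 = -I := by
      have hz : (e.1 - I) * (e.1 + I) = 0 := by linear_combination hA' - Complex.I_sq
      rcases mul_eq_zero.1 hz with h | h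
      · exact Or.inl (sub_eq_zero.1 h)
      · exact Or.inr (eq_neg_of_add_eq_zero_left h)
    have hαne : e.1 ≠ 0 := by
      rcases hα with h | h <;> rw [h] <;> simp [Complex.I_ne_zero]
    set w := f ((0 : ℂ), (1 : ℂ)) with hw
    -- w.1 = 0
    have hm2 : f ((0 : ℂ), (-I : ℂ)) = cayMulC b' e w := by
      have := hmul ((I : ℂ), (0 : ℂ)) ((0 : ℂ), (1 : ℂ))
      have hc : cayMulC b ((I : ℂ), (0 : ℂ)) ((0 : ℂ), (1 : ℂ)) = ((0 : ℂ), (-I : ℂ)) := by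
        simp [cayMulC]
      rwa [hc] at this
    have hm3 : f ((0 : ℂ), (I : ℂ)) = cayMulC b' w e := by
      have := hmul ((0 : ℂ), (1 : ℂ)) ((I : ℂ), (0 : ℂ))
      have hc : cayMulC b ((0 : ℂ), (1 : ℂ)) ((I : ℂ), (0 : ℂ)) = ((0 : ℂ), (I : ℂ)) := by
        simp [cayMulC]
      rwa [hc] at this
    have hneg : (((0 : ℂ), (-I : ℂ)) : ℂ × ℂ) = (-1 : ℝ) • (((0 : ℂ), (I : ℂ)) : ℂ × ℂ) := by
      simp [Prod.ext_iff]
    have hsum : cayMulC b' e w + cayMulC b' w e = 0 := by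
      have h5 : cayMulC b' e w = -(cayMulC b' w e) := by
        rw [← hm2, ← hm3, hneg, map_smul]
        simp
      rw [h5]; ring
    have hγ : w.1 = 0 := by
      have hf : (cayMulC b' e w).1 + (cayMulC b' w e).1 = 0 := by
        have := congrArg Prod.fst hsum
        simpa using this
      simp only [cayMulC, hβ, map_zero, mul_zero, add_zero] at hf
      have h2 : (2 : ℂ) * (e.1 * w.1) = 0 := by
        linear_combination hf
      rcases mul_eq_zero.1 h2 with h | h
      · norm_num at h
      · rcases mul_eq_zero.1 h with h | h
        · exact absurd h hαne
        · exact h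
    -- w.2 ≠ 0
    have hδ : w.2 ≠ 0 := by
      intro h
      have hwz : w = 0 := by
        apply Prod.ext
        · simpa using hγ
        · simpa using h
      have h0 : f ((0 : ℂ), (1 : ℂ)) = f 0 := by rw [map_zero, ← hw, hwz]
      have := f.injective h0
      simp [Prod.ext_iff] at this
    -- final computation
    have hc : cayMulC b ((0 : ℂ), (1 : ℂ)) ((0 : ℂ), (1 : ℂ)) = (b, (0 : ℂ)) := by
      simp [cayMulC]
    have hbdec : ((b : ℂ), (0 : ℂ)) = p • (((1 : ℂ), (0 : ℂ)) : ℂ × ℂ)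
        + q • (((I : ℂ), (0 : ℂ)) : ℂ × ℂ) := by
      simp [hbpq, Prod.ext_iff, Complex.real_smul]
    have hmain : ((p : ℂ) + (q : ℂ) * e.1, (q : ℂ) * e.2) = cayMulC b' w w := by
      have h6 := hmul ((0 : ℂ), (1 : ℂ)) ((0 : ℂ), (1 : ℂ))
      rw [hc, hbdec, map_add, map_smul, map_smul, hone, ← he, ← hw] at h6
      rw [← h6]
      simp [Prod.ext_iff, Complex.real_smul]
    have hfin : b' * (Complex.normSq w.2 : ℂ) = (p : ℂ) + (q : ℂ) * e.1 := by
      have h1 := congrArg Prod.fst hmain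
      simp only [cayMulC, hγ] at h1
      rw [← Complex.mul_conj w.2]
      linear_combination -h1
    have hnsq : Complex.normSq w.2 ≠ 0 := by simpa [Complex.normSq_eq_zero] using hδ
    have hpos : 0 < Complex.normSq w.2 :=
      lt_of_le_of_ne (Complex.normSq_nonneg _) (Ne.symm hnsq)
    refine ⟨(Complex.normSq w.2)⁻¹, by positivity, ?_⟩
    have hnsq' : (Complex.normSq w.2 : ℂ) ≠ 0 := by exact_mod_cast hnsq
    rcases hα with h | h
    · left
      rw [h] at hfin
      push_cast
      field_simp
      linear_combination hfin
    · right
      rw [h] at hfin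
      push_cast
      field_simp
      linear_combination hfin
  · rintro ⟨t, ht, hcase⟩
    have ht' : (0 : ℝ) < t⁻¹ := by positivity
    set s : ℝ := Real.sqrt t⁻¹ with hs
    have hs0 : 0 < s := Real.sqrt_pos.2 ht'
    have hs2 : s * s = t⁻¹ := Real.mul_self_sqrt (le_of_lt ht')
    have hsne : (s : ℂ) ≠ 0 := by exact_mod_cast ne_of_gt hs0
    have htne : (t : ℂ) ≠ 0 := by exact_mod_cast ne_of_gt ht
    have hsc : (s : ℂ) * (s : ℂ) = ((t : ℂ))⁻¹ := by
      rw [← Complex.ofReal_mul, hs2, Complex.ofReal_inv]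
    rcases hcase with h | h
    · -- b' = t * b, use f(u,v) = (u, s*v)
      have hkey : b' * ((s : ℂ) * (s : ℂ)) = b := by
        rw [h, ← hbpq, hsc]
        field_simp
      refine ⟨{ toFun := fun x => (x.1, (s : ℂ) * x.2)
                map_add' := by
                  intro x y
                  simp [Prod.ext_iff]
                  ring
                map_smul' := by
                  intro r x
                  simp [Prod.ext_iff, Complex.real_smul]
                  ring
                invFun := fun x => (x.1, ((s : ℂ))⁻¹ * x.2)
                left_inv := by
                  intro x
                  simp [Prod.ext_iff]
                  field_simp
                right_inv := by
                  intro x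
                  simp [Prod.ext_iff]
                  field_simp }, ?_, ?_⟩
      · simp
      · intro x y
        simp only [cayMulC, LinearEquiv.coe_mk, LinearMap.coe_mk, AddHom.coe_mk,
          Prod.mk.injEq, map_mul, Complex.conj_ofReal]
        constructor
        · linear_combination (-(y.2 * (starRingEnd ℂ) x.2)) * hkey
        · ring
    · -- b' = t * conj b, use f(u,v) = (conj u, s * conj v)
      have hkey : b' * ((s : ℂ) * (s : ℂ)) = (starRingEnd ℂ) b := by
        rw [h, hsc, hbpq]
        rw [map_add, map_mul, Complex.conj_ofReal, Complex.conj_ofReal, Complex.conj_I]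
        field_simp
        ring
      refine ⟨{ toFun := fun x => ((starRingEnd ℂ) x.1, (s : ℂ) * (starRingEnd ℂ) x.2)
                map_add' := by
                  intro x y
                  simp [Prod.ext_iff]
                  ring
                map_smul' := by
                  intro r x
                  simp [Prod.ext_iff, Complex.real_smul, map_mul, Complex.conj_ofReal]
                  ring
                invFun := fun x => ((starRingEnd ℂ) x.1, ((s : ℂ))⁻¹ * (starRingEnd ℂ) x.2)
                left_inv := by
                  intro x
                  simp [Prod.ext_iff, map_mul, Complex.conj_ofReal, Complex.conj_conj]
                  field_simp
                right_inv := by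
                  intro x
                  simp [Prod.ext_iff, map_mul, Complex.conj_ofReal, Complex.conj_conj]
                  field_simp }, ?_, ?_⟩
      · simp
      · intro x y
        simp only [cayMulC, LinearEquiv.coe_mk, LinearMap.coe_mk, AddHom.coe_mk,
          Prod.mk.injEq, map_add, map_mul, Complex.conj_ofReal, Complex.conj_conj]
        constructor
        · linear_combination (-((starRingEnd ℂ) y.2 * x.2)) * hkey
        · ring
end
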